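/- arXiv:2110.04870 — 4 statements merged into one kernel-verified Lean document; each statement's English description precedes it below -/
import Mathlib

section
/- (Axiom 7 verification for the von Neumann reality measure: flagging.) Let ρ t (t : Fin n) be density matrices on (Fin dA × Fin dB), let p t be nonnegative reals with ∑ t, p t = 1, and define the flagged state ρ_f on ((Fin dA × Fin dB) × Fin n) by ρ_f = ∑ t, p t • (ρ t ⊗ₖ Matrix.stdBasisMatrix t t 1). Let Φ'_A be the pinching on the enlarged space by the projectors ((A i) ⊗ₖ 1) ⊗ₖ 1. Then S(Φ'_A(ρ_f)) − S(ρ_f) = ∑ t, p t · (S(Φ_A(ρ t)) − S(ρ t)); that is, the mean A-reality is unchanged under flagging. -/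
open Matrix Kronecker BigOperators
open scoped ComplexOrder

/-- The unrevealed-measurement (pinching) map on the bipartite system:
`Φ_A(ρ) = ∑ i, (A i ⊗ₖ 1) * ρ * (A i ⊗ₖ 1)`. -/
noncomputable def pinch {dA dB : ℕ} {ι : Type*} [Fintype ι]
    (A : ι → Matrix (Fin dA) (Fin dA) ℂ)
    (ρ : Matrix (Fin dA × Fin dB) (Fin dA × Fin dB) ℂ) :
    Matrix (Fin dA × Fin dB) (Fin dA × Fin dB) ℂ :=
  ∑ i, ((A i) ⊗ₖ (1 : Matrix (Fin dB) (Fin dB) ℂ)) * ρ *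
    ((A i) ⊗ₖ (1 : Matrix (Fin dB) (Fin dB) ℂ))

/-- The pinching on the flag-enlarged space, by the projectors `((A i) ⊗ₖ 1) ⊗ₖ 1`. -/
noncomputable def pinchFlag {dA dB n : ℕ} {ι : Type*} [Fintype ι]
    (A : ι → Matrix (Fin dA) (Fin dA) ℂ)
    (ρ : Matrix ((Fin dA × Fin dB) × Fin n) ((Fin dA × Fin dB) × Fin n) ℂ) :
    Matrix ((Fin dA × Fin dB) × Fin n) ((Fin dA × Fin dB) × Fin n) ℂ :=
  ∑ i, (((A i) ⊗ₖ (1 : Matrix (Fin dB) (Fin dB) ℂ)) ⊗ₖ (1 : Matrix (Fin n) (Fin n) ℂ)) * ρ *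
    (((A i) ⊗ₖ (1 : Matrix (Fin dB) (Fin dB) ℂ)) ⊗ₖ (1 : Matrix (Fin n) (Fin n) ℂ))

/-- The von Neumann entropy of a Hermitian matrix, via its eigenvalues. -/
noncomputable def vnEntropy {m : Type*} [Fintype m] [DecidableEq m]
    {ρ : Matrix m m ℂ} (hρ : ρ.IsHermitian) : ℝ :=
  ∑ k, Real.negMulLog (hρ.eigenvalues k)

/-! The flagged state is block diagonal with blocks `p t • ρ t`, and the enlarged pinching acts
blockwise, so the spectrum of each flagged matrix is the union over `t` of `p t` times the spectrum
of the corresponding block. Since `negMulLog (p * λ) = λ * negMulLog p + p * negMulLog λ`, each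
flagged entropy is `∑ t, (negMulLog (p t) * tr + p t * S)`, and the `negMulLog (p t)` terms cancel
in the difference because pinching preserves the trace. -/

namespace Matrix

open Polynomial

lemma sum_kronecker {ι l m n p α : Type*} [NonUnitalNonAssocSemiring α] (s : Finset ι)
    (M : ι → Matrix l m α) (B : Matrix n p α) :
    (∑ i ∈ s, M i) ⊗ₖ B = ∑ i ∈ s, M i ⊗ₖ B := by
  ext
  simp [sum_apply, Finset.sum_mul]

lemma sum_smul_kronecker_single {l n o α R : Type*} [Fintype o] [DecidableEq o] [Semiring α]
    [Monoid R] [DistribMulAction R α] (c : o → R) (M : o → Matrix l n α) :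
    ∑ t, c t • (M t ⊗ₖ single t t (1 : α)) = blockDiagonal fun t => c t • M t := by
  ext ⟨i, k⟩ ⟨j, k'⟩
  by_cases hk : k = k'
  · subst hk
    simp [sum_apply, single_apply]
  · simp [sum_apply, single_apply, ite_and, blockDiagonal_apply_ne _ _ _ hk, hk]

variable {m o 𝕜 : Type*} [Fintype m] [DecidableEq m] [Fintype o] [DecidableEq o] [RCLike 𝕜]

lemma charpoly_blockDiagonal {R : Type*} [CommRing R] (M : o → Matrix m m R) :
    (blockDiagonal M).charpoly = ∏ k, (M k).charpoly := by
  have hcharmatrix : charmatrix (blockDiagonal M) = blockDiagonal fun k => charmatrix (M k) := by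
    refine Matrix.ext fun ⟨i, k⟩ ⟨j, k'⟩ => ?_
    simp only [charmatrix_apply, blockDiagonal_apply', diagonal_apply, Prod.mk.injEq]
    split_ifs <;> simp_all
  rw [charpoly, hcharmatrix, det_blockDiagonal]
  rfl

lemma IsHermitian.sum_comp_eigenvalues_eq_of_charpoly_eq {M : Matrix m m 𝕜} (hM : M.IsHermitian)
    {κ : Type*} [Fintype κ] (d : κ → ℝ) (h : M.charpoly = ∏ k, (X - C (d k : 𝕜)))
    (f : ℝ → ℝ) :
    ∑ k, f (hM.eigenvalues k) = ∑ k, f (d k) := by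
  have hroots := hM.roots_charpoly_eq_eigenvalues
  rw [h, roots_prod _ _ (by simp [Finset.prod_ne_zero_iff, X_sub_C_ne_zero])] at hroots
  simp only [roots_X_sub_C, Multiset.bind_singleton] at hroots
  have hmap :
      Multiset.map hM.eigenvalues Finset.univ.val = Multiset.map d Finset.univ.val := by
    refine Multiset.map_injective (RCLike.ofReal_injective (K := 𝕜)) ?_
    rw [Multiset.map_map, Multiset.map_map]
    exact hroots.symm
  have hsum := congrArg (fun s => (s.map f).sum) hmap
  simp only [Multiset.map_map] at hsum
  exact hsum

lemma IsHermitian.charpoly_smul {M : Matrix m m 𝕜} (hM : M.IsHermitian) (c : ℝ) :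
    (c • M).charpoly = ∏ k, (X - C ((c * hM.eigenvalues k : ℝ) : 𝕜)) := by
  conv_lhs => rw [hM.spectral_theorem, Unitary.conjStarAlgAut_apply, ← Matrix.smul_mul,
    ← Matrix.mul_smul, charpoly_mul_comm, ← mul_assoc]
  rw [Unitary.coe_star_mul_self, one_mul, ← diagonal_smul, charpoly_diagonal]
  simp

end Matrix

section Pinching

variable {dA dB n : ℕ} {ι : Type*} [Fintype ι] (A : ι → Matrix (Fin dA) (Fin dA) ℂ)

lemma pinch_smul (c : ℝ) (ρ : Matrix (Fin dA × Fin dB) (Fin dA × Fin dB) ℂ) :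
    pinch A (c • ρ) = c • pinch A ρ := by
  simp only [pinch, Finset.smul_sum, Matrix.mul_smul, Matrix.smul_mul]

lemma trace_pinch (hA : ∑ i, A i * A i = 1)
    (ρ : Matrix (Fin dA × Fin dB) (Fin dA × Fin dB) ℂ) :
    (pinch A ρ).trace = ρ.trace := by
  have hcycle : ∀ i, ((A i ⊗ₖ (1 : Matrix (Fin dB) (Fin dB) ℂ)) * ρ * (A i ⊗ₖ 1)).trace
      = (((A i * A i) ⊗ₖ (1 : Matrix (Fin dB) (Fin dB) ℂ)) * ρ).trace := fun i => by
    rw [trace_mul_cycle, ← mul_kronecker_mul, one_mul]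
  rw [pinch, trace_sum, Finset.sum_congr rfl fun i _ => hcycle i, ← trace_sum, ← Finset.sum_mul,
    ← sum_kronecker, hA, one_kronecker_one, one_mul]

lemma pinchFlag_blockDiagonal (V : Fin n → Matrix (Fin dA × Fin dB) (Fin dA × Fin dB) ℂ) :
    pinchFlag A (blockDiagonal V) = blockDiagonal fun t => pinch A (V t) := by
  simp only [pinchFlag, pinch, kronecker_one (n := Fin n), ← blockDiagonal_mul]
  ext ⟨i, k⟩ ⟨j, k'⟩
  simp only [Matrix.sum_apply, blockDiagonal_apply']
  split_ifs <;> simp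

end Pinching

lemma vnEntropy_eq_of_eq_blockDiagonal_smul {m o : Type*} [Fintype m] [DecidableEq m]
    [Fintype o] [DecidableEq o] {N : Matrix (m × o) (m × o) ℂ} (hN : N.IsHermitian)
    {M : o → Matrix m m ℂ} (hM : ∀ t, (M t).IsHermitian) (c : o → ℝ)
    (hNM : N = blockDiagonal fun t => c t • M t) :
    vnEntropy hN = ∑ t, (Real.negMulLog (c t) * (M t).trace.re + c t * vnEntropy (hM t)) := by
  have hspectrum :
      vnEntropy hN = ∑ x : m × o, Real.negMulLog (c x.2 * (hM x.2).eigenvalues x.1) := by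
    refine hN.sum_comp_eigenvalues_eq_of_charpoly_eq _ ?_ _
    rw [hNM, charpoly_blockDiagonal, Fintype.prod_prod_type, Finset.prod_comm]
    simp_rw [(hM _).charpoly_smul]
  have htrace : ∀ t, (M t).trace.re = ∑ k, (hM t).eigenvalues k := fun t => by
    simp [(hM t).trace_eq_sum_eigenvalues]
  rw [hspectrum, Fintype.sum_prod_type, Finset.sum_comm]
  refine Finset.sum_congr rfl fun t _ => ?_
  simp only [Real.negMulLog_mul, Finset.sum_add_distrib, ← Finset.sum_mul, ← Finset.mul_sum,
    htrace, vnEntropy]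
  ring

theorem flagging_invariance_general {dA dB n : ℕ} {ι : Type*} [Fintype ι] [DecidableEq ι]
    (A : ι → Matrix (Fin dA) (Fin dA) ℂ)
    (hproj : ∀ i j, A i * A j = if i = j then A i else 0)
    (hsum : ∑ i, A i = 1)
    (ρ : Fin n → Matrix (Fin dA × Fin dB) (Fin dA × Fin dB) ℂ)
    (hρ : ∀ t, (ρ t).PosSemidef)
    (p : Fin n → ℝ)
    (hf : (∑ t, p t • ((ρ t) ⊗ₖ Matrix.single t t (1 : ℂ))).IsHermitian)
    (hΦf : (pinchFlag A (∑ t, p t • ((ρ t) ⊗ₖ Matrix.single t t (1 : ℂ)))).IsHermitian)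
    (hΦ : ∀ t, (pinch A (ρ t)).IsHermitian) :
    vnEntropy hΦf - vnEntropy hf
      = ∑ t, p t * (vnEntropy (hΦ t) - vnEntropy (hρ t).isHermitian) := by
  have hflag : ∑ t, p t • ((ρ t) ⊗ₖ Matrix.single t t (1 : ℂ))
      = blockDiagonal fun t => p t • ρ t :=
    sum_smul_kronecker_single p ρ
  have hpinched : pinchFlag A (∑ t, p t • ((ρ t) ⊗ₖ Matrix.single t t (1 : ℂ)))
      = blockDiagonal fun t => p t • pinch A (ρ t) := by
    simp only [hflag, pinchFlag_blockDiagonal, pinch_smul]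
  have htrace (t : Fin n) : (pinch A (ρ t)).trace = (ρ t).trace :=
    trace_pinch A (by simp [hproj, hsum]) (ρ t)
  rw [vnEntropy_eq_of_eq_blockDiagonal_smul hΦf hΦ p hpinched,
    vnEntropy_eq_of_eq_blockDiagonal_smul hf (fun t => (hρ t).isHermitian) p hflag,
    ← Finset.sum_sub_distrib]
  refine Finset.sum_congr rfl fun t _ => ?_
  rw [htrace]
  ring

/-- Axiom 7 (flagging): the mean A-irreality is unchanged under flagging:
`S(Φ'_A(ρ_f)) − S(ρ_f) = ∑ t, p t (S(Φ_A(ρ t)) − S(ρ t))`. -/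
theorem flagging_invariance {dA dB n : ℕ} {ι : Type*} [Fintype ι] [DecidableEq ι]
    (A : ι → Matrix (Fin dA) (Fin dA) ℂ)
    (hproj : ∀ i j, A i * A j = if i = j then A i else 0)
    (hherm : ∀ i, (A i)ᴴ = A i)
    (hsum : ∑ i, A i = 1)
    (ρ : Fin n → Matrix (Fin dA × Fin dB) (Fin dA × Fin dB) ℂ)
    (hρ : ∀ t, (ρ t).PosSemidef) (htr : ∀ t, (ρ t).trace = 1)
    (p : Fin n → ℝ) (hp : ∀ t, 0 ≤ p t) (hp1 : ∑ t, p t = 1)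
    (hf : (∑ t, p t • ((ρ t) ⊗ₖ Matrix.single t t (1 : ℂ))).IsHermitian)
    (hΦf : (pinchFlag A (∑ t, p t • ((ρ t) ⊗ₖ Matrix.single t t (1 : ℂ)))).IsHermitian)
    (hΦ : ∀ t, (pinch A (ρ t)).IsHermitian) :
    vnEntropy hΦf - vnEntropy hf
      = ∑ t, p t * (vnEntropy (hΦ t) - vnEntropy (hρ t).isHermitian) :=
  flagging_invariance_general A hproj hsum ρ hρ p hf hΦf hΦ
end

section
/- (Axiom 6 verification for the von Neumann reality measure: additivity over independent systems.) Let ρ and σ be density matrices on Fin dA, and let Φ² be the pinching on (Fin dA × Fin dA) by the projectors (A i) ⊗ₖ (A j) for (i,j) ∈ ι × ι (the observable A measured on each copy). Then S(Φ²(ρ ⊗ₖ σ)) − S(ρ ⊗ₖ σ) = (S(φ_A(ρ)) − S(ρ)) + (S(φ_A(σ)) − S(σ)); equivalently, the A-reality of the product state is the sum of the individual A-realities. -/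
open Matrix Kronecker BigOperators
open scoped ComplexOrder

/-- The single-system pinching `φ_A(σ) = ∑ i, (A i) σ (A i)`. -/
noncomputable def pinch1 {dA : ℕ} {ι : Type*} [Fintype ι]
    (A : ι → Matrix (Fin dA) (Fin dA) ℂ)
    (σ : Matrix (Fin dA) (Fin dA) ℂ) : Matrix (Fin dA) (Fin dA) ℂ :=
  ∑ i, (A i) * σ * (A i)

/-- The pinching on two copies by the projectors `(A i) ⊗ₖ (A j)`. -/
noncomputable def pinch2 {dA : ℕ} {ι : Type*} [Fintype ι]
    (A : ι → Matrix (Fin dA) (Fin dA) ℂ)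
    (M : Matrix (Fin dA × Fin dA) (Fin dA × Fin dA) ℂ) :
    Matrix (Fin dA × Fin dA) (Fin dA × Fin dA) ℂ :=
  ∑ q : ι × ι, ((A q.1) ⊗ₖ (A q.2)) * M * ((A q.1) ⊗ₖ (A q.2))

/-!
Pinching by the product projectors factorises: `Φ²(ρ ⊗ σ) = φ_A(ρ) ⊗ φ_A(σ)`. Diagonalising
both factors simultaneously shows that the eigenvalues of a Kronecker product of Hermitian
matrices are the pairwise products of their eigenvalues, so
`negMulLog (x y) = y negMulLog x + x negMulLog y` gives `S(X ⊗ Y) = S(X) tr Y + tr X S(Y)`.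
Pinching preserves the trace, so all four traces are `1` and both entropies split additively.
-/

open Polynomial in
theorem Matrix.IsHermitian.map_eigenvalues_eq_of_charpoly_eq {n : Type*} [Fintype n]
    [DecidableEq n] {M : Matrix n n ℂ} (hM : M.IsHermitian) {d : n → ℝ}
    (h : M.charpoly = ∏ i, (X - C (d i : ℂ))) :
    Finset.univ.val.map hM.eigenvalues = Finset.univ.val.map d := by
  have hroots := hM.roots_charpoly_eq_eigenvalues
  rw [h, roots_prod _ _ (by simp [Finset.prod_ne_zero_iff, X_sub_C_ne_zero])] at hroots
  simp only [roots_X_sub_C, Multiset.bind_singleton] at hroots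
  rw [← Multiset.map_map] at hroots
  exact (Multiset.map_injective Complex.ofReal_injective (by simpa using hroots)).symm

open Polynomial in
theorem Matrix.IsHermitian.charpoly_kronecker {n m : Type*} [Fintype n] [DecidableEq n]
    [Fintype m] [DecidableEq m] {A : Matrix n n ℂ} {B : Matrix m m ℂ}
    (hA : A.IsHermitian) (hB : B.IsHermitian) :
    (A ⊗ₖ B).charpoly
      = ∏ p : n × m, (X - C ((hA.eigenvalues p.1 * hB.eigenvalues p.2 : ℝ) : ℂ)) := by
  set U : Matrix n n ℂ := ↑hA.eigenvectorUnitary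
  set V : Matrix m m ℂ := ↑hB.eigenvectorUnitary
  have hUV : star (U ⊗ₖ V) * (U ⊗ₖ V) = 1 :=
    (kronecker_mem_unitary hA.eigenvectorUnitary.2 hB.eigenvectorUnitary.2).1
  have hAB : A ⊗ₖ B = (U ⊗ₖ V) * (diagonal (RCLike.ofReal ∘ hA.eigenvalues) ⊗ₖ
      diagonal (RCLike.ofReal ∘ hB.eigenvalues)) * star (U ⊗ₖ V) := by
    conv_lhs => rw [hA.spectral_theorem, hB.spectral_theorem]
    simp only [Unitary.conjStarAlgAut_apply, star_eq_conjTranspose, conjTranspose_kronecker,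
      mul_kronecker_mul]
    rfl
  rw [hAB, charpoly_mul_comm, ← mul_assoc, hUV, one_mul, diagonal_kronecker_diagonal,
    charpoly_diagonal]
  simp

open Polynomial in
theorem vnEntropy_eq_sum_of_charpoly_eq {n : Type*} [Fintype n] [DecidableEq n]
    {M : Matrix n n ℂ} (hM : M.IsHermitian) {d : n → ℝ}
    (h : M.charpoly = ∏ i, (X - C (d i : ℂ))) :
    vnEntropy hM = ∑ i, Real.negMulLog (d i) := by
  have := congrArg (fun s ↦ (s.map Real.negMulLog).sum) (hM.map_eigenvalues_eq_of_charpoly_eq h)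
  simp only [Multiset.map_map, Function.comp_def] at this
  exact this

theorem vnEntropy_kronecker {n m : Type*} [Fintype n] [DecidableEq n] [Fintype m]
    [DecidableEq m] {A : Matrix n n ℂ} {B : Matrix m m ℂ} (hA : A.IsHermitian)
    (hB : B.IsHermitian) (hAB : (A ⊗ₖ B).IsHermitian) :
    vnEntropy hAB = vnEntropy hA * B.trace.re + A.trace.re * vnEntropy hB := by
  rw [vnEntropy_eq_sum_of_charpoly_eq hAB (hA.charpoly_kronecker hB), Fintype.sum_prod_type,
    hA.trace_eq_sum_eigenvalues, hB.trace_eq_sum_eigenvalues, vnEntropy, vnEntropy]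
  simp only [Real.negMulLog_mul, Finset.sum_add_distrib, ← Finset.sum_mul, ← Finset.mul_sum,
    Complex.coe_algebraMap, Complex.re_sum, Complex.ofReal_re]
  ring

theorem vnEntropy_congr {n : Type*} [Fintype n] [DecidableEq n] {M N : Matrix n n ℂ}
    (hM : M.IsHermitian) (hN : N.IsHermitian) (h : M = N) : vnEntropy hM = vnEntropy hN := by
  subst h
  rfl

theorem trace_pinch1 {dA : ℕ} {ι : Type*} [Fintype ι] {A : ι → Matrix (Fin dA) (Fin dA) ℂ}
    (hidem : ∀ i, A i * A i = A i) (hsum : ∑ i, A i = 1) (σ : Matrix (Fin dA) (Fin dA) ℂ) :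
    (pinch1 A σ).trace = σ.trace := by
  rw [pinch1, trace_sum]
  simp_rw [trace_mul_cycle _ σ, hidem]
  rw [← trace_sum, ← Finset.sum_mul, hsum, one_mul]

theorem pinch2_kronecker {dA : ℕ} {ι : Type*} [Fintype ι] (A : ι → Matrix (Fin dA) (Fin dA) ℂ)
    (ρ σ : Matrix (Fin dA) (Fin dA) ℂ) :
    pinch2 A (ρ ⊗ₖ σ) = pinch1 A ρ ⊗ₖ pinch1 A σ := by
  ext ⟨a, b⟩ ⟨c, d⟩
  simp only [pinch2, pinch1, ← mul_kronecker_mul, Fintype.sum_prod_type, Matrix.sum_apply,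
    kroneckerMap_apply, Finset.sum_mul_sum]

theorem irreality_additive_general {dA : ℕ} {ι : Type*} [Fintype ι] [DecidableEq ι]
    (A : ι → Matrix (Fin dA) (Fin dA) ℂ)
    (hproj : ∀ i j, A i * A j = if i = j then A i else 0)
    (hsum : ∑ i, A i = 1)
    (ρ σ : Matrix (Fin dA) (Fin dA) ℂ)
    (hρ : ρ.PosSemidef) (htrρ : ρ.trace = 1)
    (hσ : σ.PosSemidef) (htrσ : σ.trace = 1)
    (hprod : (ρ ⊗ₖ σ).IsHermitian)
    (hΦ2 : (pinch2 A (ρ ⊗ₖ σ)).IsHermitian)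
    (hφρ : (pinch1 A ρ).IsHermitian)
    (hφσ : (pinch1 A σ).IsHermitian) :
    vnEntropy hΦ2 - vnEntropy hprod
      = (vnEntropy hφρ - vnEntropy hρ.isHermitian)
        + (vnEntropy hφσ - vnEntropy hσ.isHermitian) := by
  have hidem (i : ι) : A i * A i = A i := by simpa using hproj i i
  have hφ : (pinch1 A ρ ⊗ₖ pinch1 A σ).IsHermitian := pinch2_kronecker A ρ σ ▸ hΦ2
  rw [vnEntropy_congr hΦ2 hφ (pinch2_kronecker A ρ σ), vnEntropy_kronecker hφρ hφσ,
    vnEntropy_kronecker hρ.isHermitian hσ.isHermitian, trace_pinch1 hidem hsum,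
    trace_pinch1 hidem hsum, htrρ, htrσ, Complex.one_re]
  ring

/-- Axiom 6 (additivity): for independent systems,
`S(Φ²(ρ ⊗ σ)) − S(ρ ⊗ σ) = (S(φ_A(ρ)) − S(ρ)) + (S(φ_A(σ)) − S(σ))`. -/
theorem irreality_additive {dA : ℕ} {ι : Type*} [Fintype ι] [DecidableEq ι]
    (A : ι → Matrix (Fin dA) (Fin dA) ℂ)
    (hproj : ∀ i j, A i * A j = if i = j then A i else 0)
    (hherm : ∀ i, (A i)ᴴ = A i)
    (hsum : ∑ i, A i = 1)
    (ρ σ : Matrix (Fin dA) (Fin dA) ℂ)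
    (hρ : ρ.PosSemidef) (htrρ : ρ.trace = 1)
    (hσ : σ.PosSemidef) (htrσ : σ.trace = 1)
    (hprod : (ρ ⊗ₖ σ).IsHermitian)
    (hΦ2 : (pinch2 A (ρ ⊗ₖ σ)).IsHermitian)
    (hφρ : (pinch1 A ρ).IsHermitian)
    (hφσ : (pinch1 A σ).IsHermitian) :
    vnEntropy hΦ2 - vnEntropy hprod
      = (vnEntropy hφρ - vnEntropy hρ.isHermitian)
        + (vnEntropy hφσ - vnEntropy hσ.isHermitian) :=
  irreality_additive_general A hproj hsum ρ σ hρ htrρ hσ htrσ hprod hΦ2 hφρ hφσ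
end

section
/- (Irreality decomposition into local irreality plus quantum discord.) For every density matrix ρ on (Fin dA × Fin dB), defining the mutual information I(ρ) = S(Tr_B ρ) + S(Tr_A ρ) − S(ρ): S(Φ_A(ρ)) − S(ρ) = (S(φ_A(Tr_B ρ)) − S(Tr_B ρ)) + (I(ρ) − I(Φ_A(ρ))); that is, 𝕴_A(ρ) = 𝕴_A(ρ_A) + D_A(ρ), where D_A(ρ) = I(ρ) − I(Φ_A(ρ)) is the nonoptimized quantum discord associated with A. -/
open Matrix Kronecker BigOperators
open scoped ComplexOrder

/-- Partial trace over the second factor. -/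
noncomputable def trB {dA dB : ℕ}
    (M : Matrix (Fin dA × Fin dB) (Fin dA × Fin dB) ℂ) :
    Matrix (Fin dA) (Fin dA) ℂ :=
  fun i i' => ∑ j, M (i, j) (i', j)

/-- Partial trace over the first factor. -/
noncomputable def trA {dA dB : ℕ}
    (M : Matrix (Fin dA × Fin dB) (Fin dA × Fin dB) ℂ) :
    Matrix (Fin dB) (Fin dB) ℂ :=
  fun j j' => ∑ i, M (i, j) (i, j')

private lemma vnEntropy_congr_s14 {m : Type*} [Fintype m] [DecidableEq m]
    {ρ σ : Matrix m m ℂ} (h : ρ = σ) (hρ : ρ.IsHermitian) (hσ : σ.IsHermitian) :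
    vnEntropy hρ = vnEntropy hσ := by subst h; rfl

private lemma trB_pinch {dA dB : ℕ} {ι : Type*} [Fintype ι]
    (A : ι → Matrix (Fin dA) (Fin dA) ℂ)
    (ρ : Matrix (Fin dA × Fin dB) (Fin dA × Fin dB) ℂ) :
    trB (pinch A ρ) = pinch1 A (trB ρ) := by
  ext i i'
  show (∑ j, pinch A ρ (i, j) (i', j)) = pinch1 A (trB ρ) i i'
  simp only [pinch, pinch1, trB, Matrix.sum_apply, Matrix.mul_apply,
    kroneckerMap_apply, Fintype.sum_prod_type,
    Matrix.one_apply, mul_ite, mul_one, mul_zero, ite_mul, zero_mul,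
    Finset.sum_ite_eq, Finset.sum_ite_eq', Finset.mem_univ, if_true]
  rw [Finset.sum_comm]
  refine Finset.sum_congr rfl fun k _ => ?_
  simp only [Finset.sum_mul, Finset.mul_sum]
  rw [Finset.sum_comm]
  refine Finset.sum_congr rfl fun a _ => ?_
  exact Finset.sum_comm

private lemma trA_pinch {dA dB : ℕ} {ι : Type*} [Fintype ι] [DecidableEq ι]
    (A : ι → Matrix (Fin dA) (Fin dA) ℂ)
    (hproj : ∀ i j, A i * A j = if i = j then A i else 0)
    (hsum : ∑ i, A i = 1)
    (ρ : Matrix (Fin dA × Fin dB) (Fin dA × Fin dB) ℂ) :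
    trA (pinch A ρ) = trA ρ := by
  have key : ∀ a c : Fin dA,
      (∑ k : ι, ∑ i, A k c i * A k i a) = if c = a then 1 else 0 := by
    intro a c
    have h1 : (∑ k : ι, ∑ i, A k c i * A k i a) = ∑ k : ι, (A k * A k) c a := by
      simp [Matrix.mul_apply]
    have h2 : ∑ k : ι, (A k) c a = (1 : Matrix (Fin dA) (Fin dA) ℂ) c a := by
      rw [← hsum, Matrix.sum_apply]
    rw [h1]
    simp only [hproj, if_pos]
    rw [h2, Matrix.one_apply]
  ext j j'
  show (∑ i, pinch A ρ (i, j) (i, j')) = trA ρ j j'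
  simp only [pinch, trA, Matrix.sum_apply]
  calc
    ∑ i, (∑ k : ι, (((A k) ⊗ₖ (1 : Matrix (Fin dB) (Fin dB) ℂ)) * ρ *
        ((A k) ⊗ₖ (1 : Matrix (Fin dB) (Fin dB) ℂ))) (i,j) (i,j'))
      = ∑ k : ι, ∑ a, ∑ c, ∑ i, A k c i * A k i a * ρ (a,j) (c,j') := by
        simp only [Matrix.mul_apply, kroneckerMap_apply, Fintype.sum_prod_type,
          Matrix.one_apply, mul_ite, mul_one, mul_zero, ite_mul, zero_mul,
          Finset.sum_ite_eq, Finset.sum_ite_eq', Finset.mem_univ, if_true]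
        simp only [Finset.sum_mul]
        rw [Finset.sum_comm]
        refine Finset.sum_congr rfl fun k _ => ?_
        rw [Finset.sum_comm]
        conv_lhs => enter [2, x1]; rw [Finset.sum_comm]
        rw [Finset.sum_comm]
        refine Finset.sum_congr rfl fun a _ => Finset.sum_congr rfl fun c _ =>
          Finset.sum_congr rfl fun i _ => by ring
    _ = ∑ a, ∑ c, (∑ k : ι, ∑ i, A k c i * A k i a) * ρ (a,j) (c,j') := by
        simp only [Finset.sum_mul]
        rw [Finset.sum_comm]
        refine Finset.sum_congr rfl fun a _ => ?_
        rw [Finset.sum_comm]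
    _ = ∑ i, ρ (i,j) (i,j') := by
        simp_rw [key, ite_mul, one_mul, zero_mul]
        simp

/-- Irreality decomposition: `𝕴_A(ρ) = 𝕴_A(ρ_A) + D_A(ρ)`, where
`D_A(ρ) = I(ρ) − I(Φ_A(ρ))` is the non-optimized quantum discord and
`I(τ) = S(Tr_B τ) + S(Tr_A τ) − S(τ)` is the mutual information. -/
theorem irreality_decomposition {dA dB : ℕ} {ι : Type*} [Fintype ι] [DecidableEq ι]
    (A : ι → Matrix (Fin dA) (Fin dA) ℂ)
    (hproj : ∀ i j, A i * A j = if i = j then A i else 0)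
    (hherm : ∀ i, (A i)ᴴ = A i)
    (hsum : ∑ i, A i = 1)
    (ρ : Matrix (Fin dA × Fin dB) (Fin dA × Fin dB) ℂ)
    (hρ : ρ.PosSemidef) (htr : ρ.trace = 1)
    (hΦ : (pinch A ρ).IsHermitian)
    (hB : (trB ρ).IsHermitian) (hA : (trA ρ).IsHermitian)
    (hφ : (pinch1 A (trB ρ)).IsHermitian)
    (hBΦ : (trB (pinch A ρ)).IsHermitian) (hAΦ : (trA (pinch A ρ)).IsHermitian) :
    vnEntropy hΦ - vnEntropy hρ.isHermitian
      = (vnEntropy hφ - vnEntropy hB)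
        + ((vnEntropy hB + vnEntropy hA - vnEntropy hρ.isHermitian)
            - (vnEntropy hBΦ + vnEntropy hAΦ - vnEntropy hΦ)) := by
  rw [vnEntropy_congr_s14 (trB_pinch A ρ) hBΦ hφ,
    vnEntropy_congr_s14 (trA_pinch A hproj hsum ρ) hAΦ hA]
  ring
end

section
/- (Bridge between the divergence-based and entropy-based irreality, Eq. establishing D(ρ‖Φ_A(ρ)) = 𝕴_A(ρ).) Let ρ be a positive definite density matrix on (Fin dA × Fin dB). Then D(ρ‖Φ_A(ρ)) = S(Φ_A(ρ)) − S(ρ), where D(τ‖ω) = (trace(τ * (hτ.cfc Real.log)) − trace(τ * (hω.cfc Real.log))).re is the von Neumann relative entropy defined via the Hermitian functional calculus, and S is the von Neumann entropy. -/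
open Matrix Kronecker BigOperators
open scoped ComplexOrder

/-- The von Neumann relative entropy `D(τ‖ω)`, via the Hermitian functional calculus. -/
noncomputable def relEnt {m : Type*} [Fintype m] [DecidableEq m]
    {τ ω : Matrix m m ℂ} (hτ : τ.IsHermitian) (hω : ω.IsHermitian) : ℝ :=
  ((τ * hτ.cfc Real.log).trace - (τ * hω.cfc Real.log).trace).re

/-!
Let `Pᵢ = Aᵢ ⊗ 1`, a complete family of orthogonal idempotents, so that `Φ_A(ρ) = ∑ Pᵢ ρ Pᵢ`.
Each `Pᵢ` commutes with `Φ_A(ρ)`, hence with `log Φ_A(ρ)`. The pinching map is self-dual for the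
trace pairing and fixes everything commuting with all `Pᵢ`, so
`tr(ρ log Φ_A(ρ)) = tr(Φ_A(ρ) log Φ_A(ρ)) = -S(Φ_A(ρ))`, while `tr(ρ log ρ) = -S(ρ)`.
-/

section Pinching

variable {R : Type*} [Semiring R] {I : Type*} [Fintype I] {e : I → R}

theorem OrthogonalIdempotents.mul_sum_mul_mul (he : OrthogonalIdempotents e) (x : R) (j : I) :
    e j * ∑ i, e i * x * e i = e j * x * e j := by
  rw [Finset.mul_sum, Finset.sum_eq_single j]
  · rw [← mul_assoc, ← mul_assoc, (he.idem j).eq]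
  · intro i _ hij
    rw [← mul_assoc, ← mul_assoc, he.ortho (Ne.symm hij), zero_mul, zero_mul]
  · simp

theorem OrthogonalIdempotents.sum_mul_mul_mul (he : OrthogonalIdempotents e) (x : R) (j : I) :
    (∑ i, e i * x * e i) * e j = e j * x * e j := by
  rw [Finset.sum_mul, Finset.sum_eq_single j]
  · rw [mul_assoc, (he.idem j).eq]
  · intro i _ hij
    rw [mul_assoc, he.ortho hij, mul_zero]
  · simp

theorem OrthogonalIdempotents.commute_sum_mul_mul (he : OrthogonalIdempotents e) (x : R) (j : I) :
    Commute (e j) (∑ i, e i * x * e i) :=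
  (he.mul_sum_mul_mul x j).trans (he.sum_mul_mul_mul x j).symm

theorem CompleteOrthogonalIdempotents.sum_mul_mul_eq_self_of_commute
    (he : CompleteOrthogonalIdempotents e) {x : R} (hx : ∀ i, Commute (e i) x) :
    ∑ i, e i * x * e i = x := by
  calc ∑ i, e i * x * e i = ∑ i, e i * x := by
        refine Finset.sum_congr rfl fun i _ => ?_
        rw [mul_assoc, ← (hx i).eq, ← mul_assoc, (he.idem i).eq]
    _ = x := by rw [← Finset.sum_mul, he.complete, one_mul]

theorem Matrix.trace_sum_mul_mul_mul {n α : Type*} [Fintype n] [CommSemiring α]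
    (P : I → Matrix n n α) (ρ L : Matrix n n α) :
    ((∑ i, P i * ρ * P i) * L).trace = (ρ * ∑ i, P i * L * P i).trace := by
  simp only [Finset.sum_mul, Finset.mul_sum, Matrix.trace_sum]
  refine Finset.sum_congr rfl fun i _ => ?_
  simp only [mul_assoc]
  rw [Matrix.trace_mul_comm (P i)]
  simp only [mul_assoc]

theorem CompleteOrthogonalIdempotents.kronecker_one {m n α : Type*} [Fintype m] [DecidableEq m]
    [Fintype n] [DecidableEq n] [CommSemiring α] {P : I → Matrix m m α}
    (hP : CompleteOrthogonalIdempotents P) :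
    CompleteOrthogonalIdempotents (fun i => P i ⊗ₖ (1 : Matrix n n α)) :=
  hP.map ((kroneckerAlgEquiv m n α).toAlgHom.comp Algebra.TensorProduct.includeLeft).toRingHom

end Pinching

theorem Matrix.IsHermitian.commute_cfc {n 𝕜 : Type*} [Fintype n] [DecidableEq n] [RCLike 𝕜]
    {A B : Matrix n n 𝕜} (hA : A.IsHermitian) (h : Commute B A) (f : ℝ → ℝ) :
    Commute B (hA.cfc f) := by
  rw [← hA.cfc_eq]
  exact (h.symm.cfc_real f).symm

theorem Matrix.IsHermitian.trace_cfc {n 𝕜 : Type*} [Fintype n] [DecidableEq n] [RCLike 𝕜]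
    {A : Matrix n n 𝕜} (hA : A.IsHermitian) (f : ℝ → ℝ) :
    (hA.cfc f).trace = ∑ i, (f (hA.eigenvalues i) : 𝕜) := by
  rw [Matrix.IsHermitian.cfc, Unitary.conjStarAlgAut_apply, Matrix.trace_mul_cycle,
    Unitary.coe_star_mul_self, one_mul, Matrix.trace_diagonal]
  rfl

theorem Matrix.IsHermitian.mul_cfc {n 𝕜 : Type*} [Fintype n] [DecidableEq n] [RCLike 𝕜]
    {A : Matrix n n 𝕜} (hA : A.IsHermitian) (f : ℝ → ℝ) :
    A * hA.cfc f = hA.cfc (fun x => x * f x) := by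
  rw [← hA.cfc_eq, ← hA.cfc_eq, cfc_mul (fun x => x) f A (hf := ?_) (hg := ?_), cfc_id' ℝ A]
  all_goals exact A.finite_real_spectrum.continuousOn _

theorem re_trace_mul_cfc_log {m : Type*} [Fintype m] [DecidableEq m] {ω : Matrix m m ℂ}
    (hω : ω.IsHermitian) : ((ω * hω.cfc Real.log).trace).re = -vnEntropy hω := by
  rw [hω.mul_cfc, hω.trace_cfc, Complex.re_sum, vnEntropy, ← Finset.sum_neg_distrib]
  refine Finset.sum_congr rfl fun k _ => ?_
  simp [Real.negMulLog]

theorem relEnt_pinch_eq_irreality_general {dA dB : ℕ} {ι : Type*} [Fintype ι] [DecidableEq ι]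
    (A : ι → Matrix (Fin dA) (Fin dA) ℂ)
    (hproj : ∀ i j, A i * A j = if i = j then A i else 0)
    (hsum : ∑ i, A i = 1)
    (ρ : Matrix (Fin dA × Fin dB) (Fin dA × Fin dB) ℂ)
    (hρ : ρ.PosDef)
    (hΦ : (pinch A ρ).IsHermitian) :
    relEnt hρ.isHermitian hΦ = vnEntropy hΦ - vnEntropy hρ.isHermitian := by
  have hA : CompleteOrthogonalIdempotents A := ⟨OrthogonalIdempotents.iff_mul_eq.mpr hproj, hsum⟩
  have hP := hA.kronecker_one (n := Fin dB)
  have hlog (i : ι) : Commute (A i ⊗ₖ 1) (hΦ.cfc Real.log) :=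
    hΦ.commute_cfc (hP.commute_sum_mul_mul ρ i) Real.log
  have htrace : (pinch A ρ * hΦ.cfc Real.log).trace = (ρ * hΦ.cfc Real.log).trace := by
    refine (trace_sum_mul_mul_mul _ ρ _).trans ?_
    rw [hP.sum_mul_mul_eq_self_of_commute hlog]
  rw [relEnt, Complex.sub_re, ← htrace, re_trace_mul_cfc_log, re_trace_mul_cfc_log]
  ring

/-- Bridge between the divergence-based and entropy-based irreality:
`D(ρ‖Φ_A(ρ)) = S(Φ_A(ρ)) − S(ρ)`. -/
theorem relEnt_pinch_eq_irreality {dA dB : ℕ} {ι : Type*} [Fintype ι] [DecidableEq ι]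
    (A : ι → Matrix (Fin dA) (Fin dA) ℂ)
    (hproj : ∀ i j, A i * A j = if i = j then A i else 0)
    (hherm : ∀ i, (A i)ᴴ = A i)
    (hsum : ∑ i, A i = 1)
    (ρ : Matrix (Fin dA × Fin dB) (Fin dA × Fin dB) ℂ)
    (hρ : ρ.PosDef) (htr : ρ.trace = 1)
    (hΦ : (pinch A ρ).IsHermitian) :
    relEnt hρ.isHermitian hΦ = vnEntropy hΦ - vnEntropy hρ.isHermitian :=
  relEnt_pinch_eq_irreality_general A hproj hsum ρ hρ hΦ
end
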